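/- arXiv:2108.12986 — 6 statements merged into one kernel-verified Lean document; each statement's English description precedes it below -/
import Mathlib

section
/- Let X be a one-sided shift space and T_X its hom tree-shift. Then T_X is uniform CPC-block gluing (CPC UBG) if and only if T_X is block gluing (BG). -/
namespace TreeShiftPaper

/-- Words over the alphabet `Σ = {0, …, k-1}`: nodes of the `k`-tree. -/
abbrev Word (k : ℕ) := List (Fin k)

variable {k : ℕ} {A : Type*}

/-- A set of words is prefix-closed if it contains every prefix of each of its elements. -/
def PrefixClosed (S : Set (Word k)) : Prop :=
  ∀ w ∈ S, ∀ v : Word k, v <+: w → v ∈ S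

/-- The pattern with support `S` and labels `u` appears in the labeled tree `t`. -/
def PatternAppears (t : Word k → A) (S : Set (Word k)) (u : Word k → A) : Prop :=
  ∃ s : Word k, ∀ w ∈ S, t (s ++ w) = u w

/-- The set of labeled trees avoiding every pattern of the forbidden family `F`. -/
def treeShiftOf (F : Set ((Set (Word k)) × (Word k → A))) : Set (Word k → A) :=
  {t | ∀ p ∈ F, ¬ PatternAppears t p.1 p.2}

/-- `T` is a tree-shift: it is defined by some forbidden set of patterns
(each with finite prefix-closed support). -/
def IsTreeShift (T : Set (Word k → A)) : Prop :=
  ∃ F : Set ((Set (Word k)) × (Word k → A)),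
    (∀ p ∈ F, p.1.Finite ∧ PrefixClosed p.1) ∧ T = treeShiftOf F

/-- `T` is a tree-shift of finite type: the forbidden set can be chosen finite. -/
def IsTreeSFT (T : Set (Word k → A)) : Prop :=
  ∃ F : Set ((Set (Word k)) × (Word k → A)),
    F.Finite ∧ (∀ p ∈ F, p.1.Finite ∧ PrefixClosed p.1) ∧ T = treeShiftOf F

/-- The finite word `w` occurs in the one-sided sequence `x` at position `i`. -/
def OccursAt (x : ℕ → A) (i : ℕ) (w : List A) : Prop :=
  ∀ j : Fin w.length, x (i + (j : ℕ)) = w.get j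

/-- The one-sided shift space defined by the forbidden set of words `F`. -/
def shiftOf (F : Set (List A)) : Set (ℕ → A) :=
  {x | ∀ w ∈ F, ∀ i : ℕ, ¬ OccursAt x i w}

/-- `X` is a one-sided shift space. -/
def IsShift (X : Set (ℕ → A)) : Prop := ∃ F : Set (List A), X = shiftOf F

/-- `X` is a one-sided shift of finite type. -/
def IsSFT (X : Set (ℕ → A)) : Prop :=
  ∃ F : Set (List A), F.Finite ∧ X = shiftOf F

/-- A chain: an infinite path in the tree starting at the root. -/
def IsChain (c : ℕ → Word k) : Prop :=
  c 0 = [] ∧ ∀ n : ℕ, ∃ i : Fin k, c (n + 1) = c n ++ [i]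

/-- The hom tree-shift associated with a one-sided shift space `X`: labeled trees whose
projection along every chain lies in `X`. -/
def homTree (k : ℕ) (X : Set (ℕ → A)) : Set (Word k → A) :=
  {t | ∀ c : ℕ → Word k, IsChain c → (fun n => t (c n)) ∈ X}

/-- `Y` is a sofic one-sided shift: image of an SFT under a sliding block code induced
by an `n`-block map. -/
def IsSofic (Y : Set (ℕ → A)) : Prop :=
  ∃ (B : Type) (_ : Fintype B) (X : Set (ℕ → B)) (n : ℕ) (f : (ℕ → B) → A),
    IsSFT X ∧ (∀ u v : ℕ → B, (∀ j < n, u j = v j) → f u = f v) ∧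
    (fun x : ℕ → B => fun i => f (fun j => x (i + j))) '' X = Y

/-- `T` is a sofic tree-shift: image of a tree-SFT under the map induced by an
`n`-block map. -/
def IsSoficTree (T : Set (Word k → A)) : Prop :=
  ∃ (B : Type) (_ : Fintype B) (T' : Set (Word k → B)) (n : ℕ) (g : (Word k → B) → A),
    IsTreeSFT T' ∧
    (∀ u v : Word k → B, (∀ w : Word k, w.length ≤ n → u w = v w) → g u = g v) ∧
    (fun t : Word k → B => fun w => g (fun z => t (w ++ z))) '' T' = T

/-- The Markov tree-shift determined by `k` binary `d × d` transition matrices. -/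
def markovTree (k d : ℕ) (M : Fin k → Matrix (Fin d) (Fin d) Bool) :
    Set (Word k → Fin d) :=
  {t | ∀ w : Word k, ∀ i : Fin k, M i (t w) (t (w ++ [i])) = true}

/-- The one-sided Markov (vertex) shift determined by a binary `d × d` matrix. -/
def markovShift (d : ℕ) (M : Matrix (Fin d) (Fin d) Bool) : Set (ℕ → Fin d) :=
  {x | ∀ i : ℕ, M (x i) (x (i + 1)) = true}

/-- The pattern with support `S` and labels `u` is admissible in `T`. -/
def AdmissiblePattern (T : Set (Word k → A)) (S : Set (Word k)) (u : Word k → A) : Prop :=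
  ∃ t ∈ T, ∃ s : Word k, ∀ w ∈ S, t (s ++ w) = u w

/-- The `n`-block `u` (a labeling of `Δ_n`) is admissible in `T`. -/
def AdmissibleBlock (T : Set (Word k → A)) (n : ℕ) (u : Word k → A) : Prop :=
  ∃ t ∈ T, ∃ s : Word k, ∀ w : Word k, w.length ≤ n → t (s ++ w) = u w

/-- Word distance on the `k`-tree:
`d(x,y) = |x| + |y| - 2 · max{|w| : w` a common prefix of `x` and `y}`. -/
noncomputable def wordDist (x y : Word k) : ℕ :=
  x.length + y.length - 2 * sSup {m : ℕ | ∃ w : Word k, w <+: x ∧ w <+: y ∧ w.length = m}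

/-- The boundary `∂S = {w ∈ S : wΣ ∩ S = ∅}` of a support `S`. -/
def boundary (S : Set (Word k)) : Set (Word k) :=
  {w | w ∈ S ∧ ∀ i : Fin k, w ++ [i] ∉ S}

/-- A complete prefix code: a finite prefix set such that every word of length at least
`max_{z ∈ P} |z|` has a prefix in `P`. -/
def IsCPC (P : Set (Word k)) : Prop :=
  P.Finite ∧ (∀ x ∈ P, ∀ y ∈ P, x <+: y → x = y) ∧
  ∀ w : Word k, (∀ z ∈ P, z.length ≤ w.length) → ∃ x ∈ P, x <+: w

/-- Strong irreducibility with gap `N`. -/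
def SIGap (T : Set (Word k → A)) (N : ℕ) : Prop :=
  ∀ (Su Sv : Set (Word k)) (u v : Word k → A),
    Su.Finite → PrefixClosed Su → Sv.Finite → PrefixClosed Sv →
    AdmissiblePattern T Su u → AdmissiblePattern T Sv v →
    ∀ w : Word k, (∀ h ∈ Su, N ≤ wordDist w h) →
      ∃ t ∈ T, (∀ z ∈ Su, t z = u z) ∧ ∀ z ∈ Sv, t (w ++ z) = v z

/-- `T` is strongly irreducible (SI). -/
def SI (T : Set (Word k → A)) : Prop := ∃ N : ℕ, SIGap T N

/-- `T` is block gluing (BG). -/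
def BG (T : Set (Word k → A)) : Prop :=
  ∃ N : ℕ, ∀ (n m : ℕ) (u v : Word k → A),
    AdmissibleBlock T n u → AdmissibleBlock T m v →
    ∀ w : Word k, N + n ≤ w.length →
      ∃ t ∈ T, (∀ z : Word k, z.length ≤ n → t z = u z) ∧
        ∀ z : Word k, z.length ≤ m → t (w ++ z) = v z

/-- `T` is topologically mixing (TM). -/
def TM (T : Set (Word k → A)) : Prop :=
  ∀ H₁ H₂ : Set (Word k), H₁.Finite → H₂.Finite →
    ∃ N : ℕ, ∀ t₁ ∈ T, ∀ t₂ ∈ T, ∀ w : Word k, (∀ h ∈ H₁, N ≤ wordDist w h) →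
      ∃ t ∈ T, (∀ z ∈ H₁, t z = t₁ z) ∧ ∀ z ∈ H₂, t (w ++ z) = t₂ z

/-- `T` is irreducible (IR). -/
def IR (T : Set (Word k → A)) : Prop :=
  ∀ (n m : ℕ) (u v : Word k → A),
    AdmissibleBlock T n u → AdmissibleBlock T m v →
    ∃ w : Word k, n < w.length ∧
      ∃ t ∈ T, (∀ z : Word k, z.length ≤ n → t z = u z) ∧
        ∀ z : Word k, z.length ≤ m → t (w ++ z) = v z

/-- `T` is CPC-strongly irreducible via the prefix set `P`. -/
def CPCSIWith (T : Set (Word k → A)) (P : Set (Word k)) : Prop :=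
  ∀ (Su Sv : Set (Word k)) (u v : Word k → A),
    Su.Finite → PrefixClosed Su → Sv.Finite → PrefixClosed Sv →
    AdmissiblePattern T Su u → AdmissiblePattern T Sv v →
    ∃ t ∈ T, (∀ z ∈ Su, t z = u z) ∧
      ∀ w ∈ boundary Su, ∀ z ∈ P, ∀ y ∈ Sv, t (w ++ z ++ y) = v y

/-- `T` is CPC-strongly irreducible (CPC SI). -/
def CPCSI (T : Set (Word k → A)) : Prop := ∃ P : Set (Word k), IsCPC P ∧ CPCSIWith T P

/-- `T` is uniform CPC-strongly irreducible (CPC USI): CPC SI with `P = Σ^N`. -/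
def CPCUSI (T : Set (Word k → A)) : Prop :=
  ∃ N : ℕ, CPCSIWith T {z : Word k | z.length = N}

/-- `T` is CPC-block gluing via the prefix set `P`. -/
def CPCBGWith (T : Set (Word k → A)) (P : Set (Word k)) : Prop :=
  ∀ (n m : ℕ) (u v : Word k → A),
    AdmissibleBlock T n u → AdmissibleBlock T m v →
    ∃ t ∈ T, (∀ z : Word k, z.length ≤ n → t z = u z) ∧
      ∀ w : Word k, w.length = n → ∀ z ∈ P, ∀ y : Word k, y.length ≤ m →
        t (w ++ z ++ y) = v y

/-- `T` is CPC-block gluing (CPC BG). -/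
def CPCBG (T : Set (Word k → A)) : Prop := ∃ P : Set (Word k), IsCPC P ∧ CPCBGWith T P

/-- `T` is uniform CPC-block gluing (CPC UBG): CPC BG with `P = Σ^N`. -/
def CPCUBG (T : Set (Word k → A)) : Prop :=
  ∃ N : ℕ, CPCBGWith T {z : Word k | z.length = N}

/-- `T` is CPC-irreducible (CPC IR). -/
def CPCIR (T : Set (Word k → A)) : Prop :=
  ∀ (n m : ℕ) (u v : Word k → A),
    AdmissibleBlock T n u → AdmissibleBlock T m v →
    ∃ P : Set (Word k), IsCPC P ∧ (∀ z ∈ P, n + 1 ≤ z.length) ∧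
      ∃ t ∈ T, (∀ z : Word k, z.length ≤ n → t z = u z) ∧
        ∀ w ∈ P, ∀ y : Word k, y.length ≤ m → t (w ++ y) = v y

/-- The finite word `u` is admissible in the one-sided shift space `X`. -/
def WordAdmissible (X : Set (ℕ → A)) (u : List A) : Prop :=
  ∃ x ∈ X, ∃ i : ℕ, OccursAt x i u

/-- The one-sided shift space `X` is topologically mixing. -/
def MixingShift (X : Set (ℕ → A)) : Prop :=
  ∀ u v : List A, WordAdmissible X u → WordAdmissible X v →
    ∃ N : ℕ, ∀ n ≥ N, ∃ x ∈ X, OccursAt x 0 u ∧ OccursAt x (u.length + n) v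

/-- The one-sided shift space `X` is transitive (irreducible). -/
def TransitiveShift (X : Set (ℕ → A)) : Prop :=
  ∀ u v : List A, WordAdmissible X u → WordAdmissible X v →
    ∃ x ∈ X, ∃ n : ℕ, u.length ≤ n ∧ OccursAt x 0 u ∧ OccursAt x n v

end TreeShiftPaper

/-!
CPC UBG with `P = Σ^N` gives BG with gap `N` in any tree-shift: extend `u` to an admissible block
of depth `|w| - N` and glue `v` below it. Conversely, BG with gap `N` provides, for each node `w` of
depth `n`, a tree with top `u` and a copy of `v` at `w b^N`. Membership in a hom tree-shift is
checked chain by chain, so it survives relabelling letters depth by depth (here: overwriting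
depths `n, …, n + N - 1` by `b`) and grafting trees below the nodes of depth `n`; relabelling and
grafting the trees above gives one tree with a copy of `v` at every `w z`, `z ∈ Σ^N`.
-/

namespace TreeShiftPaper

section

variable {k : ℕ} {A : Type*}

lemma IsChain.length_eq {c : ℕ → Word k} (hc : IsChain c) (j : ℕ) : (c j).length = j := by
  induction j with
  | zero => simp [hc.1]
  | succ j ih =>
    obtain ⟨i, hi⟩ := hc.2 j
    simp [hi, ih]

lemma IsChain.prefix {c : ℕ → Word k} (hc : IsChain c) {i j : ℕ} (h : i ≤ j) :
    c i <+: c j := by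
  induction j, h using Nat.le_induction with
  | base => exact List.prefix_refl _
  | succ j _ ih =>
    obtain ⟨a, ha⟩ := hc.2 j
    rw [ha]
    exact ih.trans (List.prefix_append _ _)

lemma IsChain.mapIdx {c : ℕ → Word k} (hc : IsChain c) (g : ℕ → Fin k → Fin k) :
    IsChain fun j => (c j).mapIdx g := by
  refine ⟨by simp [hc.1], fun j => ?_⟩
  obtain ⟨i, hi⟩ := hc.2 j
  exact ⟨g (c j).length i, by simp [hi, List.mapIdx_append]⟩

lemma comp_mapIdx_mem_homTree {X : Set (ℕ → A)} {t : Word k → A} (ht : t ∈ homTree k X)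
    (g : ℕ → Fin k → Fin k) : (fun x => t (x.mapIdx g)) ∈ homTree k X :=
  fun _ hc => ht _ (hc.mapIdx g)

def overwrite (n N : ℕ) (b : Fin k) (x : Word k) : Word k :=
  x.mapIdx fun p a => if n ≤ p ∧ p < n + N then b else a

lemma overwrite_of_length_le {n N : ℕ} {b : Fin k} {x : Word k} (hx : x.length ≤ n) :
    overwrite n N b x = x := by
  refine List.ext_getElem (by simp [overwrite]) fun i hi _ => ?_
  simp only [overwrite, List.getElem_mapIdx]
  rw [if_neg (by omega)]

lemma overwrite_append_append {n N : ℕ} {b : Fin k} {w z y : Word k} (hw : w.length = n)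
    (hz : z.length = N) : overwrite n N b (w ++ z ++ y) = w ++ List.replicate N b ++ y := by
  subst hw hz
  refine List.ext_getElem (by simp [overwrite]) fun i hi _ => ?_
  simp only [overwrite, List.getElem_mapIdx, List.getElem_append, List.getElem_replicate,
    List.length_append, List.length_replicate]
  split_ifs <;> first | rfl | omega

section Graft

/-- Below depth `n`, the tree `s w` is read at absolute positions `x` (with `w` a prefix of `x`),
not relative to `w`. -/
def graft (n : ℕ) (u : Word k → A) (s : Word k → Word k → A) : Word k → A :=
  fun x => if x.length ≤ n then u x else s (x.take n) x

variable {n : ℕ} {u : Word k → A} {s : Word k → Word k → A}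

lemma graft_of_length_le {x : Word k} (hx : x.length ≤ n) : graft n u s x = u x :=
  if_pos hx

lemma graft_append {w : Word k} (hw : w.length = n)
    (htop : ∀ z : Word k, z.length ≤ n → s w z = u z) (x : Word k) :
    graft n u s (w ++ x) = s w (w ++ x) := by
  rcases x.eq_nil_or_concat with rfl | ⟨x, a, rfl⟩
  · simp only [List.append_nil]
    exact (graft_of_length_le hw.le).trans (htop w hw.le).symm
  · rw [graft, if_neg (by simp; omega), List.take_left' hw]

/-- A chain of the grafted tree passes through a single node `w` of depth `n`, so it reads as a
chain of `s w`. -/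
lemma graft_mem_homTree {X : Set (ℕ → A)}
    (hmem : ∀ w : Word k, w.length = n → s w ∈ homTree k X)
    (htop : ∀ w : Word k, w.length = n → ∀ z : Word k, z.length ≤ n → s w z = u z) :
    graft n u s ∈ homTree k X := by
  intro c hc
  have hn := hc.length_eq n
  have hproj : ∀ j, graft n u s (c j) = s (c n) (c j) := by
    intro j
    rcases le_total j n with hj | hj
    · have hlen : (c j).length ≤ n := (hc.length_eq j).trans_le hj
      rw [graft_of_length_le hlen, htop _ hn _ hlen]
    · obtain ⟨x, hx⟩ := hc.prefix hj
      rw [← hx, graft_append hn (htop _ hn)]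
  simpa only [hproj] using hmem _ hn c hc

end Graft

lemma AdmissibleBlock.exists_extension {T : Set (Word k → A)} {n : ℕ} {u : Word k → A}
    (hu : AdmissibleBlock T n u) (n' : ℕ) :
    ∃ u', AdmissibleBlock T n' u' ∧ ∀ z : Word k, z.length ≤ n → u' z = u z := by
  obtain ⟨t, ht, s, hs⟩ := hu
  exact ⟨fun x => t (s ++ x), ⟨t, ht, s, fun _ _ => rfl⟩, hs⟩

lemma bg_of_cpcubg {T : Set (Word k → A)} (h : CPCUBG T) : BG T := by
  obtain ⟨N, hN⟩ := h
  refine ⟨N, fun n m u v hu hv w hw => ?_⟩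
  obtain ⟨u', hu', hu'u⟩ := hu.exists_extension (w.length - N)
  obtain ⟨t, ht, htop, hstamp⟩ := hN _ m u' v hu' hv
  refine ⟨t, ht, fun z hz => (htop z (by omega)).trans (hu'u z hz), fun y hy => ?_⟩
  have hv_at_w := hstamp (w.take (w.length - N)) (by simp) (w.drop (w.length - N))
    (by simp; omega) y hy
  rwa [List.take_append_drop] at hv_at_w

lemma cpcubg_homTree_of_bg (hk : 0 < k) {X : Set (ℕ → A)} (h : BG (homTree k X)) :
    CPCUBG (homTree k X) := by
  obtain ⟨N, hN⟩ := h
  refine ⟨N, fun n m u v hu hv => ?_⟩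
  set b : Fin k := ⟨0, hk⟩
  have hglue : ∀ w : Word k, ∃ s : Word k → A, w.length = n → s ∈ homTree k X ∧
      (∀ z : Word k, z.length ≤ n → s z = u z) ∧
      ∀ y : Word k, y.length ≤ m → s (w ++ List.replicate N b ++ y) = v y := by
    intro w
    by_cases hw : w.length = n
    · obtain ⟨s, hs, htop, hstamp⟩ :=
        hN n m u v hu hv (w ++ List.replicate N b) (by simp; omega)
      exact ⟨s, fun _ => ⟨hs, htop, hstamp⟩⟩
    · exact ⟨u, fun h => absurd h hw⟩
  choose s hs using hglue
  -- precomposing with `overwrite n N b` copies `v` from `w ++ b^N` to every `w ++ z`, `z ∈ Σ^N`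
  set s' : Word k → Word k → A := fun w x => s w (overwrite n N b x)
  have htop : ∀ w : Word k, w.length = n → ∀ z : Word k, z.length ≤ n → s' w z = u z :=
    fun w hw z hz => by simp only [s', overwrite_of_length_le hz, (hs w hw).2.1 z hz]
  have hmem : ∀ w : Word k, w.length = n → s' w ∈ homTree k X :=
    fun w hw => comp_mapIdx_mem_homTree (hs w hw).1 _
  refine ⟨graft n u s', graft_mem_homTree hmem htop, fun z hz => graft_of_length_le hz,
    fun w hw z hz y hy => ?_⟩
  rw [List.append_assoc, graft_append hw (htop w hw), ← List.append_assoc]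
  simp only [s', overwrite_append_append hw hz, (hs w hw).2.2 y hy]

end

theorem stmt11_general {k : ℕ} (hk : 2 ≤ k) {A : Type*} (X : Set (ℕ → A)) :
    CPCUBG (homTree k X) ↔ BG (homTree k X) :=
  ⟨bg_of_cpcubg, cpcubg_homTree_of_bg (by omega)⟩

/-- For a hom tree-shift `T_X`: uniform CPC-block gluing is equivalent to block
gluing. -/
theorem stmt11 {k : ℕ} (hk : 2 ≤ k) {A : Type*} [Fintype A] (X : Set (ℕ → A))
    (hX : IsShift X) : CPCUBG (homTree k X) ↔ BG (homTree k X) :=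
  stmt11_general hk X

end TreeShiftPaper
end

section
/- Let X be a one-sided shift space and T_X its hom tree-shift. Then T_X is CPC-irreducible (CPC IR) if and only if T_X is irreducible (IR). -/
/-!
For a hom tree-shift membership is tested chain by chain, so relabelling a tree along a map of
words that sends chains to chains stays in `T_X`. Given an `n`-block `u` and a node `a` of level
`n`, irreducibility applied to the block repeating `u` along the path to `a` yields a tree with a
copy of `v` at some node `W`; relabelling along the map that steers every path onto `W` copies `v`
to every node of level `|W|` while keeping `u` along the path to `a`. Gluing these trees below
the nodes of level `n` carries `v` on a complete prefix code.
-/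

namespace TreeShiftPaper

section

variable {k : ℕ} {A : Type*}

namespace IsChain

variable {c : ℕ → Word k}

lemma length_eq_s12 (hc : IsChain c) (i : ℕ) : (c i).length = i := by
  induction i with
  | zero => simp [hc.1]
  | succ i ih => obtain ⟨j, hj⟩ := hc.2 i; simp [hj, ih]

lemma take_eq (hc : IsChain c) {i j : ℕ} (hij : i ≤ j) : (c j).take i = c i := by
  induction j, hij using Nat.le_induction with
  | base => exact List.take_of_length_le (hc.length_eq_s12 i).le
  | succ j hij ih =>
    obtain ⟨l, hl⟩ := hc.2 j
    rw [hl, List.take_append_of_le_length (by rw [hc.length_eq_s12]; omega), ih]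

lemma prefix_of_le (hc : IsChain c) {i j : ℕ} (hij : i ≤ j) : c i <+: c j :=
  hc.take_eq hij ▸ List.take_prefix i (c j)

end IsChain

lemma comp_mem_homTree {X : Set (ℕ → A)} {t : Word k → A} (ht : t ∈ homTree k X)
    {φ : Word k → Word k} (hφ : ∀ c, IsChain c → IsChain (φ ∘ c)) :
    t ∘ φ ∈ homTree k X :=
  fun c hc => ht (φ ∘ c) (hφ c hc)

/-- Sends chains to chains and every node of level `|W|` to `W`. -/
def steer (W z : Word k) : Word k :=
  W.take z.length ++ z.drop W.length

lemma steer_of_length_le {W z : Word k} (h : z.length ≤ W.length) :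
    steer W z = W.take z.length := by
  simp [steer, List.drop_eq_nil_of_le h]

lemma steer_append_of_length_eq {W z : Word k} (h : z.length = W.length) (y : Word k) :
    steer W (z ++ y) = W ++ y := by
  simp [steer, h, List.drop_left' h]

lemma isChain_steer_comp (W : Word k) {c : ℕ → Word k} (hc : IsChain c) :
    IsChain (steer W ∘ c) := by
  refine ⟨by simp [steer, hc.1], fun i => ?_⟩
  obtain ⟨j, hj⟩ := hc.2 i
  have hlen := hc.length_eq_s12 i
  simp only [Function.comp_apply, hj]
  rcases lt_or_ge i W.length with hi | hi
  · refine ⟨W[i], ?_⟩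
    rw [steer_of_length_le (by simp; omega), steer_of_length_le (by omega), List.length_append,
      hlen, List.length_singleton, List.take_succ_eq_append_getElem hi]
  · refine ⟨j, ?_⟩
    simp [steer, List.take_of_length_le, hlen, hi, Nat.le_succ_of_le hi,
      List.drop_append_of_le_length]

lemma steer_mem_homTree {X : Set (ℕ → A)} {t : Word k → A} (ht : t ∈ homTree k X)
    (W : Word k) : t ∘ steer W ∈ homTree k X :=
  comp_mem_homTree ht fun _ => isChain_steer_comp W

lemma admissibleBlock_along {X : Set (ℕ → A)} {n : ℕ} {u : Word k → A}
    (hu : AdmissibleBlock (homTree k X) n u) {a : Word k} (ha : n ≤ a.length) :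
    AdmissibleBlock (homTree k X) n (fun z => u (a.take z.length)) := by
  obtain ⟨t, ht, s, hs⟩ := hu
  refine ⟨t ∘ steer (s ++ a), steer_mem_homTree ht _, s, fun w hw => ?_⟩
  have hlen : (s ++ w).length ≤ (s ++ a).length := by simp; omega
  rw [Function.comp_apply, steer_of_length_le hlen, List.length_append,
    List.take_length_add_append]
  exact hs _ (by simp; omega)

lemma glue_mem_homTree {X : Set (ℕ → A)} {n : ℕ} {u : Word k → A}
    {τ : Word k → Word k → A} (hτ : ∀ a : Word k, a.length = n → τ a ∈ homTree k X)
    (hτu : ∀ a : Word k, a.length = n → ∀ z, z <+: a → τ a z = u z) :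
    (fun z => if z.length ≤ n then u z else τ (z.take n) z) ∈ homTree k X := by
  intro c hc
  have hcn := hc.length_eq_s12 n
  convert hτ (c n) hcn c hc using 1
  funext i
  show (if (c i).length ≤ n then u (c i) else τ ((c i).take n) (c i)) = τ (c n) (c i)
  rcases le_or_gt i n with hi | hi
  · rw [if_pos (by rw [hc.length_eq_s12]; exact hi), hτu _ hcn _ (hc.prefix_of_le hi)]
  · rw [if_neg (by rw [hc.length_eq_s12]; omega), hc.take_eq hi.le]

/-- The prefix code `⋃_{|a| = n} a Σ^(L a - n)`. -/
def levelCode (n : ℕ) (L : Word k → ℕ) : Set (Word k) :=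
  {z | n ≤ z.length ∧ z.length = L (z.take n)}

lemma append_replicate_mem_levelCode (o : Fin k) {n : ℕ} {L : Word k → ℕ} {a : Word k}
    (ha : a.length = n) (hL : n ≤ L a) :
    a ++ List.replicate (L a - n) o ∈ levelCode n L := by
  refine ⟨by simp; omega, ?_⟩
  rw [List.take_left' ha]
  simp; omega

lemma isCPC_levelCode (o : Fin k) (n : ℕ) (L : Word k → ℕ)
    (hL : ∀ a : Word k, a.length = n → n ≤ L a) : IsCPC (levelCode n L) := by
  refine ⟨?finite, ?prefixFree, ?complete⟩
  case finite =>
    refine ((List.finite_length_eq (Fin k) n).biUnion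
      fun a _ => List.finite_length_eq (Fin k) (L a)).subset fun z hz => ?_
    exact Set.mem_biUnion (x := z.take n) (by simp [hz.1]) hz.2
  case prefixFree =>
    intro x hx y hy hxy
    have htake : x.take n = y.take n := by
      rw [List.prefix_iff_eq_take.mp hxy, List.take_take, min_eq_left hx.1]
    exact hxy.eq_of_length (by rw [hx.2, hy.2, htake])
  case complete =>
    intro w hw
    have hwn : n ≤ w.length := by
      have hrep := append_replicate_mem_levelCode o (List.length_replicate (a := o) (n := n))
        (hL _ (List.length_replicate ..))
      exact (hrep.1).trans (hw _ hrep)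
    have ha : (w.take n).length = n := by simp [hwn]
    have hwL := hw _ (append_replicate_mem_levelCode o ha (hL _ ha))
    have hLlen : L (w.take n) ≤ w.length := by simpa [ha, hL _ ha] using hwL
    refine ⟨w.take (L (w.take n)), ⟨?_, ?_⟩, List.take_prefix _ _⟩
    · simp [hL _ ha, hLlen]
    · rw [List.take_take, min_eq_left (hL _ ha), List.length_take, min_eq_left hLlen]

lemma IsCPC.nonempty {P : Set (Word k)} (hP : IsCPC P) : P.Nonempty := by
  by_contra h
  obtain ⟨x, hx, -⟩ := hP.2.2 [] (by simp [Set.not_nonempty_iff_eq_empty.mp h])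
  exact h ⟨x, hx⟩

lemma IR_of_CPCIR {T : Set (Word k → A)} (hT : CPCIR T) : IR T := by
  intro n m u v hu hv
  obtain ⟨P, hP, hPlen, t, ht, htu, htv⟩ := hT n m u v hu hv
  obtain ⟨w, hw⟩ := hP.nonempty
  exact ⟨w, hPlen w hw, t, ht, htu, htv w hw⟩

lemma exists_level_of_IR {X : Set (ℕ → A)} (hIR : IR (homTree k X)) {n m : ℕ}
    {u v : Word k → A} (hu : AdmissibleBlock (homTree k X) n u)
    (hv : AdmissibleBlock (homTree k X) m v) {a : Word k} (ha : a.length = n) :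
    ∃ (L : ℕ) (t : Word k → A), n < L ∧ t ∈ homTree k X ∧ (∀ z, z <+: a → t z = u z) ∧
      ∀ z : Word k, z.length = L → ∀ y : Word k, y.length ≤ m → t (z ++ y) = v y := by
  obtain ⟨W, hW, t, ht, htu, htv⟩ := hIR n m _ v (admissibleBlock_along hu ha.ge) hv
  refine ⟨W.length, t ∘ steer W, hW, steer_mem_homTree ht W, fun z hz => ?_,
    fun z hz y hy => ?_⟩
  · have hzn : z.length ≤ n := ha ▸ hz.length_le
    have hzW : (W.take z.length).length = z.length := by simp; omega
    rw [Function.comp_apply, steer_of_length_le (by omega), htu _ (by omega), hzW,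
      ← List.prefix_iff_eq_take.mp hz]
  · rw [Function.comp_apply, steer_append_of_length_eq hz, htv y hy]

lemma CPCIR_of_IR {X : Set (ℕ → A)} (o : Fin k) (hIR : IR (homTree k X)) :
    CPCIR (homTree k X) := by
  intro n m u v hu hv
  have : Nonempty (Word k → A) := ⟨u⟩
  choose! L τ hL hτ hτu hτv using
    fun (a : Word k) (ha : a.length = n) => exists_level_of_IR hIR hu hv ha
  refine ⟨levelCode n L, isCPC_levelCode o n L fun a ha => (hL a ha).le,
    fun z hz => hz.2 ▸ hL _ (by simp [hz.1]), _, glue_mem_homTree hτ hτu,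
    fun z hz => if_pos hz, fun w hw y hy => ?_⟩
  have ha : (w.take n).length = n := by simp [hw.1]
  have hwn : n < w.length := hw.2 ▸ hL _ ha
  simp only [List.length_append, List.take_append_of_le_length hw.1]
  rw [if_neg (by omega)]
  exact hτv _ ha w hw.2 y hy

end

theorem stmt12_general {k : ℕ} (hk : 2 ≤ k) {A : Type*} (X : Set (ℕ → A)) :
    CPCIR (homTree k X) ↔ IR (homTree k X) :=
  ⟨IR_of_CPCIR, CPCIR_of_IR ⟨0, by omega⟩⟩

/-- For a hom tree-shift `T_X`: CPC-irreducibility is equivalent to irreducibility. -/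
theorem stmt12 {k : ℕ} (hk : 2 ≤ k) {A : Type*} [Fintype A] (X : Set (ℕ → A))
    (hX : IsShift X) : CPCIR (homTree k X) ↔ IR (homTree k X) :=
  stmt12_general hk X

end TreeShiftPaper
end

section
/- Let X be a one-sided shift space and T_X its hom tree-shift. If T_X is irreducible (IR), then X is transitive. -/
namespace TreeShiftPaper

lemma chain_length {k : ℕ} {c : ℕ → Word k} (hc : IsChain c) : ∀ n, (c n).length = n := by
  intro n
  induction n with
  | zero => simp [hc.1]
  | succ n ih =>
    obtain ⟨i, hi⟩ := hc.2 n
    simp [hi, ih]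

lemma shift_mem {A : Type*} {X : Set (ℕ → A)} (hX : IsShift X) {x : ℕ → A} (hx : x ∈ X)
    (i : ℕ) : (fun n => x (i + n)) ∈ X := by
  obtain ⟨F, rfl⟩ := hX
  intro w hw j hocc
  refine hx w hw (i + j) ?_
  intro jj
  simpa [Nat.add_assoc] using hocc jj

lemma seed_mem {k : ℕ} {A : Type*} {X : Set (ℕ → A)} (hX : IsShift X) {x : ℕ → A}
    (hx : x ∈ X) (i : ℕ) : (fun w : Word k => x (i + w.length)) ∈ homTree k X := by
  intro c hc
  have : (fun n => x (i + (c n).length)) = fun n => x (i + n) := by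
    funext n; rw [chain_length hc]
  show (fun n => x (i + (c n).length)) ∈ X
  rw [this]
  exact shift_mem hX hx i

lemma seed_block {k : ℕ} {A : Type*} {X : Set (ℕ → A)} (hX : IsShift X) {x : ℕ → A}
    (hx : x ∈ X) (i n : ℕ) :
    AdmissibleBlock (homTree k X) n (fun w : Word k => x (i + w.length)) :=
  ⟨_, seed_mem hX hx i, [], fun w _ => by simp⟩

set_option maxRecDepth 8000 in
/-- If the hom tree-shift `T_X` is irreducible then `X` is transitive. -/
theorem stmt14 {k : ℕ} (hk : 2 ≤ k) {A : Type*} [Fintype A] (X : Set (ℕ → A))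
    (hX : IsShift X) (h : IR (homTree k X)) : TransitiveShift X := by
  intro u v hu hv
  obtain ⟨x, hxX, i, hxu⟩ := hu
  obtain ⟨y, hyX, j, hyv⟩ := hv
  have h0k : 0 < k := lt_of_lt_of_le two_pos hk
  obtain ⟨w, hwlen, t, htT, htu, htv⟩ :=
    h u.length v.length (fun z => x (i + z.length)) (fun z => y (j + z.length))
      (seed_block hX hxX i u.length) (seed_block hX hyX j v.length)
  set z0 : Fin k := ⟨0, h0k⟩ with hz0
  set c : ℕ → Word k := fun n => w.take n ++ List.replicate (n - w.length) z0 with hc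
  have hclen : ∀ n, (c n).length = min n w.length + (n - w.length) := by
    intro n; simp [hc]
  have hchain : IsChain c := by
    constructor
    · simp [hc]
    · intro n
      by_cases hn : n < w.length
      · refine ⟨w.get ⟨n, hn⟩, ?_⟩
        have h1 : n + 1 - w.length = 0 := Nat.sub_eq_zero_of_le hn
        have h2 : n - w.length = 0 := Nat.sub_eq_zero_of_le hn.le
        show w.take (n + 1) ++ List.replicate (n + 1 - w.length) z0 =
          (w.take n ++ List.replicate (n - w.length) z0) ++ [w.get ⟨n, hn⟩]
        rw [h1, h2, List.replicate_zero, List.append_nil, List.append_nil,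
          List.take_succ, List.getElem?_eq_getElem hn]
        simp
      · push_neg at hn
        refine ⟨z0, ?_⟩
        have h1 : w.take (n + 1) = w := List.take_of_length_le (by omega)
        have h2 : w.take n = w := List.take_of_length_le hn
        have h3 : n + 1 - w.length = (n - w.length) + 1 := by omega
        simp [hc, h1, h2, h3, List.replicate_succ']
  have hx' := htT c hchain
  refine ⟨_, hx', w.length, hwlen.le, ?_, ?_⟩
  · intro jj
    have hjj : (jj : ℕ) < w.length := lt_trans jj.isLt hwlen
    have hcjj : c (jj : ℕ) = w.take (jj : ℕ) := by
      simp [hc, Nat.sub_eq_zero_of_le hjj.le]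
    have hlen : (c (jj : ℕ)).length = (jj : ℕ) := by
      rw [hcjj, List.length_take]; omega
    have := htu (c (jj : ℕ)) (by rw [hlen]; exact jj.isLt.le)
    show t (c (0 + (jj : ℕ))) = u.get jj
    rw [Nat.zero_add, this, hlen]
    exact hxu jj
  · intro jj
    have hcjj : c (w.length + (jj : ℕ)) = w ++ List.replicate (jj : ℕ) z0 := by
      simp [hc, List.take_of_length_le (Nat.le_add_right _ _)]
    have := htv (List.replicate (jj : ℕ) z0) (by simp [jj.isLt.le])
    show t (c (w.length + (jj : ℕ))) = v.get jj
    rw [hcjj, this]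
    simpa using hyv jj

end TreeShiftPaper
end

section
/- Let A be a d×d binary (adjacency) matrix, X_A the associated one-sided Markov shift and T_A the hom tree-shift of X_A. Then X_A is transitive if and only if T_A is irreducible (IR). -/
namespace TreeShiftPaper

section Aux

variable {k d : ℕ} {M : Matrix (Fin d) (Fin d) Bool}

/-- The chain obtained by reading off letters from `f`. -/
def seqChain (f : ℕ → Fin k) (j : ℕ) : Word k := (List.range j).map f

lemma seqChain_isChain (f : ℕ → Fin k) : IsChain (seqChain f) :=
  ⟨rfl, fun j => ⟨f j, by simp [seqChain, List.range_succ]⟩⟩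

lemma seqChain_succ (f : ℕ → Fin k) (j : ℕ) :
    seqChain f (j + 1) = seqChain f j ++ [f j] := by
  simp [seqChain, List.range_succ]

lemma seqChain_const (i : Fin k) (j : ℕ) :
    seqChain (fun _ => i) j = List.replicate j i := by
  simp [seqChain]

lemma seqChain_getD (u : Word k) (c : Fin k) :
    ∀ j, j ≤ u.length → seqChain (fun a => u.getD a c) j = u.take j := by
  intro j
  induction j with
  | zero => intro _; simp [seqChain]
  | succ j ih =>
    intro hj
    rw [seqChain_succ, ih (by omega), List.take_succ]
    have hjl : j < u.length := hj
    rw [List.getD_eq_getElem u c hjl, List.getElem?_eq_getElem hjl]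
    rfl

lemma mem_homTree_iff (hk : 0 < k) {t : Word k → Fin d} :
    t ∈ homTree k (markovShift d M) ↔
      ∀ (w : Word k) (i : Fin k), M (t w) (t (w ++ [i])) = true := by
  constructor
  · intro ht w i
    have hc := ht (seqChain (fun a => (w ++ [i]).getD a i)) (seqChain_isChain _)
    have h1 : seqChain (fun a => (w ++ [i]).getD a i) w.length = w := by
      rw [seqChain_getD _ _ _ (by simp), List.take_left]
    have h2 : seqChain (fun a => (w ++ [i]).getD a i) (w.length + 1) = w ++ [i] := by
      have : w.length + 1 = (w ++ [i]).length := by simp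
      rw [seqChain_getD _ _ _ (le_of_eq this), this, List.take_length]
    have := hc w.length
    simp only [h1, h2] at this
    exact this
  · intro h c hc j
    obtain ⟨i, hi⟩ := hc.2 j
    simp only [hi]
    exact h _ i

lemma homTree_shift (hk : 0 < k) {t : Word k → Fin d}
    (ht : t ∈ homTree k (markovShift d M)) (s : Word k) :
    (fun z => t (s ++ z)) ∈ homTree k (markovShift d M) := by
  rw [mem_homTree_iff hk] at ht ⊢
  intro w i
  simpa [List.append_assoc] using ht (s ++ w) i

end Aux

/-- For an adjacency matrix `A`: the Markov shift `X_A` is transitive iff the hom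
tree-shift `T_A` is irreducible. -/
theorem stmt16 {k : ℕ} (hk : 2 ≤ k) (d : ℕ) (M : Matrix (Fin d) (Fin d) Bool) :
    TransitiveShift (markovShift d M) ↔ IR (homTree k (markovShift d M)) := by
  have hk0 : 0 < k := by omega
  set z0 : Fin k := ⟨0, hk0⟩ with hz0
  constructor
  · -- Transitive → IR
    intro htr n m u v hu hv
    obtain ⟨t₀, ht₀, s₀, hs₀⟩ := hu
    obtain ⟨t₁, ht₁, s₁, hs₁⟩ := hv
    set tu : Word k → Fin d := fun z => t₀ (s₀ ++ z) with htu
    set tv : Word k → Fin d := fun z => t₁ (s₁ ++ z) with htv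
    have htuT : tu ∈ homTree k (markovShift d M) := homTree_shift hk0 ht₀ s₀
    have htvT : tv ∈ homTree k (markovShift d M) := homTree_shift hk0 ht₁ s₁
    -- admissible words in the Markov shift
    have hαget : ∀ (j : Fin (List.ofFn
        (fun j : Fin (n+1) => tu (List.replicate (j : ℕ) z0))).length),
        (List.ofFn (fun j : Fin (n+1) => tu (List.replicate (j : ℕ) z0))).get j
          = tu (List.replicate (j : ℕ) z0) := by
      intro j
      rw [List.get_ofFn]
      rfl
    have hxu : (fun j => tu (List.replicate j z0)) ∈ markovShift d M := by
      have := htuT (seqChain (fun _ => z0)) (seqChain_isChain _)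
      simpa [seqChain_const] using this
    have hxv : (fun j => tv (List.replicate j z0)) ∈ markovShift d M := by
      have := htvT (seqChain (fun _ => z0)) (seqChain_isChain _)
      simpa [seqChain_const] using this
    have hαadm : WordAdmissible (markovShift d M)
        (List.ofFn (fun j : Fin (n+1) => tu (List.replicate (j : ℕ) z0))) := by
      refine ⟨_, hxu, 0, fun j => ?_⟩
      rw [Nat.zero_add, hαget j]
    have hβadm : WordAdmissible (markovShift d M) [tv []] := by
      refine ⟨_, hxv, 0, fun j => ?_⟩
      have hj : (j : ℕ) = 0 := by
        have := j.isLt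
        simp only [List.length_cons, List.length_nil] at this
        omega
      simp [hj]
    obtain ⟨x, hxX, N, hN, hx0, hxN⟩ := htr _ [tv []] hαadm hβadm
    rw [List.length_ofFn] at hN
    have hxj : ∀ j ≤ n, x j = tu (List.replicate j z0) := by
      intro j hj
      have hjlt : j < (List.ofFn
          (fun j : Fin (n+1) => tu (List.replicate (j : ℕ) z0))).length := by
        rw [List.length_ofFn]; omega
      have := hx0 ⟨j, hjlt⟩
      rw [Nat.zero_add, hαget ⟨j, hjlt⟩] at this
      exact this
    have hxNv : x N = tv [] := by
      have := hxN ⟨0, by simp⟩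
      simpa using this
    set w : Word k := List.replicate N z0 with hw
    set p : Word k := List.replicate (n+1) z0 with hp
    have hwlen : w.length = N := by simp [hw]
    have hplen : p.length = n + 1 := by simp [hp]
    classical
    set t : Word k → Fin d := fun z =>
      if w <+: z then tv (z.drop N)
      else if p <+: z then x z.length
      else tu z with htdef
    -- helper: a prefix of a replicate list is a replicate list
    have hrep : ∀ (a : ℕ) (z : Word k), z <+: List.replicate a z0 →
        z = List.replicate z.length z0 := by
      intro a z hz
      refine List.eq_replicate_of_mem (fun b hb => ?_)
      have := hz.sublist.subset hb
      exact List.eq_of_mem_replicate this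
    have htT : t ∈ homTree k (markovShift d M) := by
      rw [mem_homTree_iff hk0]
      intro z i
      by_cases h1 : w <+: z
      · have h1' : w <+: z ++ [i] := h1.trans (List.prefix_append _ _)
        obtain ⟨r, hr⟩ := h1
        have hd : z.drop N = r := by rw [← hr, ← hwlen, List.drop_left]
        have hd' : (z ++ [i]).drop N = r ++ [i] := by
          rw [← hr, List.append_assoc, ← hwlen, List.drop_left]
        have h1'' : w <+: z := ⟨r, hr⟩
        simp only [htdef, if_pos h1'', if_pos h1', hd, hd']
        exact (mem_homTree_iff hk0).1 htvT r i
      · by_cases h1' : w <+: z ++ [i]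
        · -- z ++ [i] = w
          have hzi : z ++ [i] = w := by
            rcases List.prefix_concat_iff.1 h1' with h | h
            · exact h.symm
            · exact absurd h h1
          have hzlen : z.length = N - 1 := by
            have := congrArg List.length hzi
            simp only [List.length_append, List.length_cons, List.length_nil, hwlen] at this
            omega
          have hzval : z = List.replicate z.length z0 :=
            hrep N z (by rw [← hw]; exact ⟨[i], hzi⟩)
          have hNpos : 1 ≤ N := by omega
          have hzt : t z = x (N - 1) := by
            by_cases h2 : p <+: z
            · simp only [htdef, if_neg h1, if_pos h2, hzlen]
            · have hlen : z.length ≤ n := by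
                by_contra hc
                exact h2 (hzval ▸ ⟨List.replicate (z.length - (n+1)) z0, by
                  rw [hp, ← List.replicate_add]; congr 1; omega⟩)
              simp only [htdef, if_neg h1, if_neg h2]
              rw [hzval, ← hzlen, ← hxj z.length hlen, hzlen]
          have hct : t (z ++ [i]) = x N := by
            have hwp : w <+: z ++ [i] := h1'
            have hde : (z ++ [i]).drop N = [] := by
              rw [hzi, ← hwlen, List.drop_length]
            simp only [htdef, if_pos hwp, hde, hxNv]
          rw [hzt, hct]
          have := hxX (N - 1)
          rwa [show N - 1 + 1 = N by omega] at this
        · by_cases h2 : p <+: z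
          · have h2' : p <+: z ++ [i] := h2.trans (List.prefix_append _ _)
            simp only [htdef, if_neg h1, if_neg h1', if_pos h2, if_pos h2',
              List.length_append, List.length_cons, List.length_nil]
            exact hxX z.length
          · by_cases h2' : p <+: z ++ [i]
            · -- z ++ [i] = p
              have hzi : z ++ [i] = p := by
                rcases List.prefix_concat_iff.1 h2' with h | h
                · exact h.symm
                · exact absurd h h2
              have hzlen : z.length = n := by
                have := congrArg List.length hzi
                simp only [List.length_append, List.length_cons, List.length_nil,
                  hplen] at this
                omega
              have hzval : z = List.replicate z.length z0 :=
                hrep (n+1) z (by rw [← hp]; exact ⟨[i], hzi⟩)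
              have hzt : t z = x n := by
                simp only [htdef, if_neg h1, if_neg h2]
                rw [hzval, hzlen, ← hxj n le_rfl]
              have hct : t (z ++ [i]) = x (n + 1) := by
                simp only [htdef, if_neg h1', if_pos h2', List.length_append,
                  List.length_cons, List.length_nil, hzlen]
              rw [hzt, hct]
              exact hxX n
            · simp only [htdef, if_neg h1, if_neg h1', if_neg h2, if_neg h2']
              exact (mem_homTree_iff hk0).1 htuT z i
    refine ⟨w, by omega, t, htT, ?_, ?_⟩
    · intro z hz
      have hnw : ¬ w <+: z := fun h => by
        have := h.length_le; omega
      have hnp : ¬ p <+: z := fun h => by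
        have := h.length_le; omega
      simp only [htdef, if_neg hnw, if_neg hnp]
      exact hs₀ z hz
    · intro z hz
      have hpre : w <+: w ++ z := List.prefix_append _ _
      simp only [htdef, if_pos hpre]
      rw [show (w ++ z).drop N = z from by rw [← hwlen, List.drop_left]]
      exact hs₁ z hz
  · -- IR → Transitive
    intro hir u v hu hv
    obtain ⟨xu, hxu, iu, hiu⟩ := hu
    obtain ⟨xv, hxv, iv, hiv⟩ := hv
    set tu : Word k → Fin d := fun z => xu (iu + z.length) with htu
    set tv : Word k → Fin d := fun z => xv (iv + z.length) with htv
    have htuT : tu ∈ homTree k (markovShift d M) := by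
      rw [mem_homTree_iff hk0]
      intro w i
      have := hxu (iu + w.length)
      simp only [htu, List.length_append, List.length_cons, List.length_nil]
      rw [show iu + (w.length + (0 + 1)) = iu + w.length + 1 by omega]
      exact this
    have htvT : tv ∈ homTree k (markovShift d M) := by
      rw [mem_homTree_iff hk0]
      intro w i
      have := hxv (iv + w.length)
      simp only [htv, List.length_append, List.length_cons, List.length_nil]
      rw [show iv + (w.length + (0 + 1)) = iv + w.length + 1 by omega]
      exact this
    have hub : AdmissibleBlock (homTree k (markovShift d M)) u.length tu :=
      ⟨tu, htuT, [], fun z _ => by simp⟩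
    have hvb : AdmissibleBlock (homTree k (markovShift d M)) v.length tv :=
      ⟨tv, htvT, [], fun z _ => by simp⟩
    obtain ⟨w, hwlen, t, htT, h1, h2⟩ := hir u.length v.length tu tv hub hvb
    set f : ℕ → Fin k := fun j => w.getD j z0 with hf
    have hcw : ∀ j, j ≤ w.length → seqChain f j = w.take j := seqChain_getD w z0
    have hcbeyond : ∀ j, seqChain f (w.length + j) = w ++ List.replicate j z0 := by
      intro j
      induction j with
      | zero =>
        rw [Nat.add_zero, hcw w.length le_rfl, List.take_length]
        simp
      | succ j ih =>
        rw [show w.length + (j + 1) = (w.length + j) + 1 by omega, seqChain_succ, ih]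
        have hfd : f (w.length + j) = z0 := List.getD_eq_default _ _ (by omega)
        rw [hfd, List.append_assoc, ← List.replicate_succ']
    set x : ℕ → Fin d := fun j => t (seqChain f j) with hx
    have hxX : x ∈ markovShift d M := htT (seqChain f) (seqChain_isChain f)
    refine ⟨x, hxX, w.length, by omega, ?_, ?_⟩
    · intro j
      have hjw : (j : ℕ) ≤ w.length := by
        have := j.isLt; omega
      have hxe : x (0 + (j : ℕ)) = t (w.take (j : ℕ)) := by
        rw [Nat.zero_add, hx]
        simp only
        rw [hcw (j : ℕ) hjw]
      rw [hxe, h1 _ (by rw [List.length_take]; have := j.isLt; omega)]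
      have hlt : (w.take (j : ℕ)).length = (j : ℕ) := by
        rw [List.length_take]; omega
      simp only [htu, hlt]
      exact hiu j
    · intro j
      have hxe : x (w.length + (j : ℕ)) = t (w ++ List.replicate (j : ℕ) z0) := by
        rw [hx]; simp only; rw [hcbeyond]
      rw [hxe, h2 _ (by rw [List.length_replicate]; have := j.isLt; omega)]
      simp only [htv, List.length_replicate]
      exact hiv j

end TreeShiftPaper
end

section
/- Let k = 2 and let T = {t ∈ {0,1}^{Σ*} : t_w = t_z whenever |w| = |z|} be the tree-shift of layer-constant binary labeled trees. Then T is uniform CPC-block gluing (indeed CPC-block gluing with P = Σ), but T is neither CPC-strongly irreducible nor strongly irreducible. -/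
namespace TreeShiftPaper

/-- The tree-shift of layer-constant binary labeled trees (`k = 2`). -/
def layerConstTree : Set (Word 2 → Fin 2) :=
  {t | ∀ w z : Word 2, w.length = z.length → t w = t z}

/-! A tree of the shift is a sequence of level labels, so an `n`-block and an `m`-block are
glued by giving the levels below `n` the labels of the second block shifted down by `n + 1`;
this is gluing through `P = Σ`. Conversely, gluing a pattern below two boundary nodes at
different depths (CPC SI), or at a node far from but at the same depth as a node of the first
pattern (SI), forces two nodes of one level to carry different labels. -/

section General

variable {k : ℕ} {A : Type*}

lemma eq_nil_of_prefix_replicate_of_prefix_replicate {α : Type*} {a b : α} (hab : a ≠ b)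
    {w : List α} {m n : ℕ} (ha : w <+: List.replicate m a) (hb : w <+: List.replicate n b) :
    w = [] := by
  cases w with
  | nil => rfl
  | cons c _ =>
    exact absurd ((List.eq_of_mem_replicate (ha.subset List.mem_cons_self)).symm.trans
      (List.eq_of_mem_replicate (hb.subset List.mem_cons_self))) hab

lemma finite_setOf_prefix (l : Word k) : {w : Word k | w <+: l}.Finite :=
  (List.finite_toSet l.inits).subset fun w hw => (List.mem_inits w l).mpr hw

lemma prefixClosed_setOf_prefix (l : Word k) : PrefixClosed {w : Word k | w <+: l} :=
  fun _ hw _ hv => hv.trans hw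

lemma PrefixClosed.union {S S' : Set (Word k)} (hS : PrefixClosed S) (hS' : PrefixClosed S') :
    PrefixClosed (S ∪ S') := by
  rintro w (hw | hw) v hv
  exacts [Or.inl (hS w hw v hv), Or.inr (hS' w hw v hv)]

lemma admissiblePattern_of_mem {T : Set (Word k → A)} {t : Word k → A} (ht : t ∈ T)
    (S : Set (Word k)) : AdmissiblePattern T S t :=
  ⟨t, ht, [], fun _ _ => rfl⟩

lemma wordDist_eq_length_add_length {x y : Word k}
    (h : ∀ w : Word k, w <+: x → w <+: y → w = []) :
    wordDist x y = x.length + y.length := by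
  have hcommon : {m : ℕ | ∃ w : Word k, w <+: x ∧ w <+: y ∧ w.length = m} = {0} := by
    refine Set.eq_singleton_iff_unique_mem.mpr ⟨⟨[], List.nil_prefix, List.nil_prefix, rfl⟩, ?_⟩
    rintro m ⟨w, hwx, hwy, rfl⟩
    simp [h w hwx hwy]
  simp [wordDist, hcommon]

end General

def ofLevels (f : ℕ → Fin 2) : Word 2 → Fin 2 := fun w => f w.length

lemma ofLevels_mem_layerConstTree (f : ℕ → Fin 2) : ofLevels f ∈ layerConstTree :=
  fun _ _ h => congrArg f h

lemma AdmissibleBlock.layerConst {n : ℕ} {u : Word 2 → Fin 2}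
    (hu : AdmissibleBlock layerConstTree n u) {w z : Word 2} (hwz : w.length = z.length)
    (hw : w.length ≤ n) : u w = u z := by
  obtain ⟨t, ht, s, hs⟩ := hu
  rw [← hs w hw, ← hs z (hwz ▸ hw)]
  exact ht _ _ (by simp [hwz])

lemma layerConstTree_cpcBGWith_length_one :
    CPCBGWith layerConstTree {z : Word 2 | z.length = 1} := by
  intro n m u v hu hv
  refine ⟨ofLevels fun d => if d ≤ n then u (List.replicate d 0)
      else v (List.replicate (d - (n + 1)) 0), ofLevels_mem_layerConstTree _, ?_, ?_⟩
  · intro z hz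
    simp only [ofLevels, if_pos hz]
    exact hu.layerConst (by simp) (by simpa)
  · intro w hw z (hz : z.length = 1) y hy
    have hdepth : (w ++ z ++ y).length = n + 1 + y.length := by simp [hw, hz, add_assoc]
    simp only [ofLevels, hdepth, show ¬ n + 1 + y.length ≤ n by omega, if_false,
      Nat.add_sub_cancel_left]
    exact hv.layerConst (by simp) (by simpa)

lemma layerConstTree_not_cpcSI : ¬ CPCSI layerConstTree := by
  rintro ⟨P, hP, hglue⟩
  obtain ⟨z, hz⟩ := hP.nonempty
  set Su : Set (Word 2) := {w | w <+: [0]} ∪ {w | w <+: [1, 0]}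
  have hboundary : ∀ b ∈ ({[0], [1, 0]} : Set (Word 2)), b ∈ boundary Su := by
    rintro b (rfl | rfl) <;>
      exact ⟨by decide, fun i => by fin_cases i <;> decide⟩
  obtain ⟨t, ht, -, hv⟩ := hglue Su {w | w <+: [0]} (ofLevels fun _ => 0)
    (ofLevels fun d => if d = 0 then 0 else 1)
    ((finite_setOf_prefix _).union (finite_setOf_prefix _))
    ((prefixClosed_setOf_prefix _).union (prefixClosed_setOf_prefix _))
    (finite_setOf_prefix _) (prefixClosed_setOf_prefix _)
    (admissiblePattern_of_mem (ofLevels_mem_layerConstTree _) _)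
    (admissiblePattern_of_mem (ofLevels_mem_layerConstTree _) _)
  have h₁ : t ([0] ++ z ++ [0]) = 1 := hv _ (hboundary _ (by simp)) z hz [0] List.prefix_rfl
  have h₀ : t ([1, 0] ++ z ++ []) = 0 := hv _ (hboundary _ (by simp)) z hz [] List.nil_prefix
  have := ht ([0] ++ z ++ [0]) ([1, 0] ++ z ++ []) (by simp)
  rw [h₁, h₀] at this
  exact absurd this (by decide)

lemma layerConstTree_not_SI : ¬ SI layerConstTree := by
  rintro ⟨N, hglue⟩
  have hfar : ∀ h ∈ {w : Word 2 | w <+: List.replicate N 0},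
      N ≤ wordDist (List.replicate N 1) h := by
    intro h hh
    rw [wordDist_eq_length_add_length fun w h₁ h₀ =>
      eq_nil_of_prefix_replicate_of_prefix_replicate (by decide) h₁ (h₀.trans hh)]
    simp
  obtain ⟨t, ht, hu, hv⟩ := hglue {w | w <+: List.replicate N 0} {[]}
    (ofLevels fun _ => 0) (ofLevels fun _ => 1)
    (finite_setOf_prefix _) (prefixClosed_setOf_prefix _)
    (Set.finite_singleton _) (by simpa using prefixClosed_setOf_prefix ([] : Word 2))
    (admissiblePattern_of_mem (ofLevels_mem_layerConstTree _) _)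
    (admissiblePattern_of_mem (ofLevels_mem_layerConstTree _) _)
    (List.replicate N 1) hfar
  have h₀ : t (List.replicate N 0) = 0 := hu _ List.prefix_rfl
  have h₁ : t (List.replicate N 1 ++ []) = 1 := hv [] rfl
  have := ht (List.replicate N 0) (List.replicate N 1 ++ []) (by simp)
  rw [h₀, h₁] at this
  exact absurd this (by decide)

/-- The layer-constant tree-shift is CPC-block gluing with `P = Σ` (hence uniform
CPC-block gluing), but is neither CPC-strongly irreducible nor strongly irreducible. -/
theorem stmt17 :
    CPCBGWith layerConstTree {z : Word 2 | z.length = 1} ∧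
    ¬ CPCSI layerConstTree ∧ ¬ SI layerConstTree :=
  ⟨layerConstTree_cpcBGWith_length_one, layerConstTree_not_cpcSI, layerConstTree_not_SI⟩

end TreeShiftPaper
end

section
/- Let X ⊆ {0,1}^{Z+} be the even shift, i.e. the one-sided shift space with forbidden words {1 0^{2n+1} 1 : n ≥ 0}. Then X is topologically mixing, but the hom tree-shift T_X is not CPC-irreducible (hence not irreducible). -/
namespace TreeShiftPaper

/-- The (one-sided) even shift: no word `1 0^{2n+1} 1` occurs. -/
def evenShift : Set (ℕ → Fin 2) :=
  shiftOf {w : List (Fin 2) | ∃ n : ℕ, w = 1 :: (List.replicate (2 * n + 1) 0 ++ [1])}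

/-! A sequence lies in the even shift iff every run of zeros between two ones has even length.
Such a run cannot pass a 1, so two sequences of the shift that both carry a 1 at the junction can
be concatenated there. For mixing, the end of `u` is padded with at most one `0` and the start of
`v` with one symbol so that the runs meeting the junction become even, and the gap is filled with
ones.

In the hom tree-shift, a root labelled `1` cannot coexist with a node `w` whose child `w0` is
labelled `1` while `w1, w10` are labelled `0, 1`: along the chains through `w0` and `w10`, the run
of zeros following the last `1` above `w` would have lengths of both parities. -/

section OccursAt

variable {A : Type*} {x : ℕ → A} {i : ℕ}

@[simp]
lemma occursAt_nil : OccursAt x i [] := fun j => j.elim0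

@[simp]
lemma occursAt_cons {a : A} {w : List A} :
    OccursAt x i (a :: w) ↔ x i = a ∧ OccursAt x (i + 1) w := by
  simp [OccursAt, Fin.forall_fin_succ, Nat.add_assoc, Nat.add_comm 1]

@[simp]
lemma occursAt_append {w₁ w₂ : List A} :
    OccursAt x i (w₁ ++ w₂) ↔ OccursAt x i w₁ ∧ OccursAt x (i + w₁.length) w₂ := by
  induction w₁ generalizing i with
  | nil => simp
  | cons a w ih => simp [ih, and_assoc, Nat.add_assoc, Nat.add_comm 1]

@[simp]
lemma occursAt_replicate {a : A} {l : ℕ} :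
    OccursAt x i (List.replicate l a) ↔ ∀ j < l, x (i + j) = a := by
  simp [OccursAt, Fin.forall_iff]

end OccursAt

def IsGap (x : ℕ → Fin 2) (i l : ℕ) : Prop :=
  x i = 1 ∧ (∀ j, i < j → j ≤ i + l → x j = 0) ∧ x (i + l + 1) = 1

section Gaps

variable {x y : ℕ → Fin 2} {i l : ℕ}

lemma occursAt_gapWord_iff : OccursAt x i (1 :: (List.replicate l 0 ++ [1])) ↔ IsGap x i l := by
  simp only [occursAt_cons, occursAt_append, occursAt_replicate, occursAt_nil, and_true,
    List.length_replicate, IsGap, Nat.add_right_comm i 1 l]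
  refine and_congr_right fun _ => and_congr_left fun _ => ⟨fun h j hij hjl => ?_, fun h j hj => ?_⟩
  · simpa [show i + 1 + (j - (i + 1)) = j by omega] using h (j - (i + 1)) (by omega)
  · exact h _ (by omega) (by omega)

lemma mem_evenShift_iff : x ∈ evenShift ↔ ∀ i l, IsGap x i l → Even l := by
  simp only [evenShift, shiftOf, Set.mem_ofPred_eq, forall_exists_index, forall_eq_apply_imp_iff,
    occursAt_gapWord_iff]
  refine ⟨fun h i l hgap => ?_, fun h n i hgap => ?_⟩
  · by_contra hodd
    obtain ⟨n, rfl⟩ := Nat.not_even_iff_odd.mp hodd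
    exact h n i hgap
  · exact Nat.not_even_two_mul_add_one n (h i _ hgap)

namespace IsGap

lemma add_succ_le (h : IsGap x i l) {q : ℕ} (hq : x q = 1) (hiq : i < q) : i + l + 1 ≤ q := by
  by_contra! hlt
  exact absurd (h.2.1 q hiq (by omega)) (hq ▸ by decide)

lemma eq_zero (h : IsGap x i l) (h1 : x (i + 1) = 1) : l = 0 := by
  have := h.add_succ_le h1 (by omega)
  omega

lemma congr (h : IsGap x i l) (hxy : ∀ j, i ≤ j → j ≤ i + l + 1 → x j = y j) : IsGap y i l :=
  ⟨hxy i le_rfl (by omega) ▸ h.1,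
    fun j hij hjl => hxy j hij.le (by omega) ▸ h.2.1 j hij hjl, hxy _ (by omega) le_rfl ▸ h.2.2⟩

end IsGap

lemma isGap_shift_iff {c : ℕ} : IsGap (fun j => x (c + j)) i l ↔ IsGap x (c + i) l := by
  simp only [IsGap, Nat.add_assoc]
  refine and_congr_right fun _ => and_congr_left fun _ =>
    ⟨fun h j hij hjl => ?_, fun h j hij hjl => ?_⟩
  · simpa [show c + (j - c) = j by omega] using h (j - c) (by omega) (by omega)
  · exact h (c + j) (by omega) (by omega)

lemma shift_mem_evenShift (hx : x ∈ evenShift) (c : ℕ) : (fun j => x (c + j)) ∈ evenShift :=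
  mem_evenShift_iff.mpr fun _ _ h => mem_evenShift_iff.mp hx _ _ (isGap_shift_iff.mp h)

lemma const_one_mem_evenShift : (fun _ => 1 : ℕ → Fin 2) ∈ evenShift :=
  mem_evenShift_iff.mpr fun _ _ h => h.eq_zero rfl ▸ ⟨0, rfl⟩

end Gaps

section Mixing

variable {x y : ℕ → Fin 2}

lemma glue_mem_evenShift (hx : x ∈ evenShift) (hy : y ∈ evenShift) {q : ℕ} (hxq : x q = 1)
    (hy0 : y 0 = 1) : (fun j => if j < q then x j else y (j - q)) ∈ evenShift := by
  set z : ℕ → Fin 2 := fun j => if j < q then x j else y (j - q)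
  have hzq : z q = 1 := by simpa [z] using hy0
  refine mem_evenShift_iff.mpr fun i l hgap => ?_
  rcases lt_or_ge i q with hiq | hqi
  · have hend := hgap.add_succ_le hzq hiq
    refine mem_evenShift_iff.mp hx i l (hgap.congr fun j _ hj => ?_)
    rcases (hj.trans hend).lt_or_eq with hjq | rfl
    · simp [z, hjq]
    · rw [hzq, hxq]
  · have hshift : (fun j => z (q + j)) = y := by funext j; simp [z]
    refine mem_evenShift_iff.mp hy (i - q) l ?_
    rw [← hshift, isGap_shift_iff, Nat.add_sub_cancel' hqi]
    exact hgap

lemma extend_mem_evenShift (hx : x ∈ evenShift) {L α : ℕ}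
    (hα : ∀ i < L, x i = 1 → (∀ j, i < j → j < L → x j = 0) → Even (L - 1 - i + α)) :
    (fun j => if j < L then x j else if j < L + α then 0 else 1) ∈ evenShift := by
  set ℓ : ℕ → Fin 2 := fun j => if j < L then x j else if j < L + α then 0 else 1
  have hℓ : ∀ j, L ≤ j → j < L + α → ℓ j = 0 := fun j h₁ h₂ => by simp [ℓ, h₂, not_lt.mpr h₁]
  refine mem_evenShift_iff.mpr fun i l hgap => ?_
  rcases le_or_gt (L + α) i with hi | hi
  · have hℓ1 : ℓ (i + 1) = 1 := by
      simp [ℓ, show ¬ i + 1 < L by omega, show ¬ i + 1 < L + α by omega]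
    exact hgap.eq_zero hℓ1 ▸ ⟨0, rfl⟩
  have hiL : i < L := by
    by_contra! hLi
    exact absurd (hℓ i hLi hi ▸ hgap.1) (by decide)
  rcases lt_or_ge (i + l + 1) L with he | he
  · exact mem_evenShift_iff.mp hx i l (hgap.congr fun j _ hj => by simp [ℓ, show j < L by omega])
  have hend : i + l + 1 = L + α := by
    refine le_antisymm (hgap.add_succ_le (by simp [ℓ]) hi) (not_lt.mp fun hlt => ?_)
    exact absurd (hℓ _ he hlt ▸ hgap.2.2) (by decide)
  have hxi : x i = 1 := by simpa [ℓ, hiL] using hgap.1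
  have hzero : ∀ j, i < j → j < L → x j = 0 := fun j h₁ h₂ => by
    simpa [ℓ, h₂] using hgap.2.1 j h₁ (by omega)
  exact (show l = L - 1 - i + α by omega) ▸ hα i hiL hxi hzero

lemma exists_extend_mem_evenShift (hx : x ∈ evenShift) (L : ℕ) :
    ∃ ℓ ∈ evenShift, (∀ j < L, ℓ j = x j) ∧ ∀ j, L < j → ℓ j = 1 := by
  let LastOne (i : ℕ) : Prop := i < L ∧ x i = 1 ∧ ∀ j, i < j → j < L → x j = 0
  have last_unique : ∀ i i', LastOne i → LastOne i' → i = i' := by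
    rintro i i' ⟨hi, hxi, hi0⟩ ⟨hi', hxi', hi0'⟩
    by_contra hne
    rcases Nat.lt_or_gt_of_ne hne with h | h
    · exact absurd (hi0 i' h hi' ▸ hxi') (by decide)
    · exact absurd (hi0' i h hi ▸ hxi) (by decide)
  obtain ⟨α, hα1, hα⟩ : ∃ α ≤ 1, ∀ i, LastOne i → Even (L - 1 - i + α) := by
    by_cases h : ∃ i, LastOne i ∧ Odd (L - 1 - i)
    · obtain ⟨i₀, h₀, hodd⟩ := h
      exact ⟨1, le_rfl, fun i hi => last_unique i₀ i h₀ hi ▸ hodd.add_one⟩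
    · exact ⟨0, zero_le_one, fun i hi => Nat.not_odd_iff_even.mp fun hodd => h ⟨i, hi, hodd⟩⟩
  refine ⟨_, extend_mem_evenShift hx (L := L) fun i hi hxi hi0 => hα i ⟨hi, hxi, hi0⟩,
    fun j hj => by simp [hj], fun j hj => ?_⟩
  simp [show ¬ j < L by omega, show ¬ j < L + α by omega]

lemma prepend_mem_evenShift (hy : y ∈ evenShift) {c : Fin 2}
    (hc : ∀ g, y g = 1 → (∀ j < g, y j = 0) → (Even g ↔ c = 1)) :
    (fun j => if j = 0 then 1 else if j = 1 then c else y (j - 2)) ∈ evenShift := by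
  set r : ℕ → Fin 2 := fun j => if j = 0 then 1 else if j = 1 then c else y (j - 2)
  have hr : ∀ j, r (2 + j) = y j := fun j => by simp [r, show 2 + j ≠ 1 by omega]
  refine mem_evenShift_iff.mpr fun i l hgap => ?_
  rcases le_or_gt 2 i with hi | hi
  · refine mem_evenShift_iff.mp hy (i - 2) l ?_
    rw [← funext hr, isGap_shift_iff, Nat.add_sub_cancel' hi]
    exact hgap
  rcases lt_or_ge (i + l + 1) 2 with he | he
  · exact (show l = 0 by omega) ▸ ⟨0, rfl⟩
  set g := i + l + 1 - 2 with hg_def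
  have hg : y g = 1 := by simpa [← hr, show 2 + g = i + l + 1 by omega] using hgap.2.2
  have hzero : ∀ j < g, y j = 0 := fun j hj => by
    simpa [← hr] using hgap.2.1 (2 + j) (by omega) (by omega)
  have hcg := hc g hg hzero
  interval_cases i
  · have hc0 : c = 0 := by simpa [r] using hgap.2.1 1 (by omega) (by omega)
    have hodd : ¬ Even g := by simp [hcg, hc0]
    exact (show l = g + 1 by omega) ▸ (Nat.not_even_iff_odd.mp hodd).add_one
  · have hc1 : c = 1 := by simpa [r] using hgap.1
    exact (show l = g by omega) ▸ hcg.mpr hc1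

lemma exists_prepend_mem_evenShift (hy : y ∈ evenShift) :
    ∃ r ∈ evenShift, r 0 = 1 ∧ ∀ j, r (2 + j) = y j := by
  let FirstOne (g : ℕ) : Prop := y g = 1 ∧ ∀ j < g, y j = 0
  have first_unique : ∀ g g', FirstOne g → FirstOne g' → g = g' := by
    rintro g g' ⟨hg, hg0⟩ ⟨hg', hg0'⟩
    by_contra hne
    rcases Nat.lt_or_gt_of_ne hne with h | h
    · exact absurd (hg0' g h ▸ hg) (by decide)
    · exact absurd (hg0 g' h ▸ hg') (by decide)
  obtain ⟨c, hc⟩ : ∃ c : Fin 2, ∀ g, FirstOne g → (Even g ↔ c = 1) := by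
    by_cases h : ∃ g, FirstOne g ∧ Odd g
    · obtain ⟨g₀, h₀, hodd⟩ := h
      refine ⟨0, fun g hg => ?_⟩
      rw [← first_unique g₀ g h₀ hg]
      simpa using Nat.not_even_iff_odd.mpr hodd
    · exact ⟨1, fun g hg => iff_of_true (Nat.not_odd_iff_even.mp fun hodd => h ⟨g, hg, hodd⟩) rfl⟩
  exact ⟨_, prepend_mem_evenShift hy fun g hg hg0 => hc g ⟨hg, hg0⟩, rfl,
    fun j => by simp [show 2 + j ≠ 1 by omega]⟩

theorem evenShift_mixing : MixingShift evenShift := by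
  rintro u v ⟨xu, hxu, iu, hu⟩ ⟨xv, hxv, iv, hv⟩
  obtain ⟨ℓ, hℓ, hℓu, hℓ1⟩ := exists_extend_mem_evenShift (shift_mem_evenShift hxu iu) u.length
  obtain ⟨r, hr, hr0, hrv⟩ := exists_prepend_mem_evenShift (shift_mem_evenShift hxv iv)
  refine ⟨3, fun n hn => ⟨_, glue_mem_evenShift hℓ hr (hℓ1 (u.length + n - 2) (by omega)) hr0,
    fun j => ?_, fun j => ?_⟩⟩
  · simpa [show (j : ℕ) < u.length + n - 2 by omega, hℓu] using hu j
  · simpa [show ¬ u.length + n + j < u.length + n - 2 by omega,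
      show u.length + n + j - (u.length + n - 2) = 2 + j by omega, hrv] using hv j

end Mixing

lemma ne_one_of_agree_of_mem_evenShift {x y : ℕ → Fin 2} (hx : x ∈ evenShift)
    (hy : y ∈ evenShift) {L p : ℕ} (hxy : ∀ j ≤ L, x j = y j) (hpL : p ≤ L) (hxp : x p = 1)
    (hx1 : x (L + 1) = 1) (hy1 : y (L + 1) = 0) : y (L + 2) ≠ 1 := by
  classical
  obtain ⟨q, hqL, hxq, hzero⟩ : ∃ q ≤ L, x q = 1 ∧ ∀ j, q < j → j ≤ L → x j = 0 :=
    ⟨Nat.findGreatest (x · = 1) L, Nat.findGreatest_le L,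
      Nat.findGreatest_spec (P := (x · = 1)) hpL hxp,
      fun j hj hjL => by have := Nat.findGreatest_is_greatest hj hjL; omega⟩
  intro hy2
  have hevenx : Even (L - q) := mem_evenShift_iff.mp hx q (L - q)
    ⟨hxq, fun j hj hjL => hzero j hj (by omega), by rwa [show q + (L - q) + 1 = L + 1 by omega]⟩
  have heveny : Even (L - q + 1) := mem_evenShift_iff.mp hy q (L - q + 1)
    ⟨hxy q hqL ▸ hxq, fun j hj hjL => ?_, by rwa [show q + (L - q + 1) + 1 = L + 2 by omega]⟩
  · exact Nat.not_even_iff_odd.mpr hevenx.add_one heveny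
  · rcases Nat.lt_or_ge j (L + 1) with hj' | hj'
    · rw [← hxy j (by omega)]
      exact hzero j hj (by omega)
    · rwa [show j = L + 1 by omega]

section HomTree

variable {k : ℕ} {A : Type*}

lemma exists_isChain_take (l : Word k) (a : Fin k) :
    ∃ c : ℕ → Word k, IsChain c ∧ ∀ j ≤ l.length, c j = l.take j := by
  refine ⟨fun j => (List.range j).map (l.getD · a), ⟨rfl, fun j => ⟨l.getD j a, ?_⟩⟩,
    fun j hj => List.ext_getElem
      (by simp only [List.length_map, List.length_range, List.length_take]; omega)
      fun m h₁ h₂ => ?_⟩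
  · simp [List.range_succ]
  · simp only [List.getElem_map, List.getElem_range, List.getElem_take]
    exact List.getD_eq_getElem _ _ _

lemma exists_mem_take_of_mem_homTree {X : Set (ℕ → A)} {t : Word k → A}
    (ht : t ∈ homTree k X) (l : Word k) (a : Fin k) :
    ∃ x ∈ X, ∀ j ≤ l.length, x j = t (l.take j) := by
  obtain ⟨c, hc, hcl⟩ := exists_isChain_take l a
  exact ⟨_, ht c hc, fun j hj => by rw [hcl j hj]⟩

lemma CPCIR.IR {T : Set (Word k → A)} (h : CPCIR T) : IR T := by
  intro n m u v hu hv
  obtain ⟨P, hP, hPlen, t, ht, htu, htv⟩ := h n m u v hu hv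
  obtain ⟨w, hw⟩ := hP.nonempty
  exact ⟨w, hPlen w hw, t, ht, htu, htv w hw⟩

end HomTree

section EvenHomTree

variable {k : ℕ}

lemma const_one_mem_homTree_evenShift : (fun _ => 1 : Word k → Fin 2) ∈ homTree k evenShift :=
  fun _ _ => const_one_mem_evenShift

def forkTree : Word (k + 2) → Fin 2 := fun w => if w = [0] ∨ w = [1, 0] then 1 else 0

lemma forkTree_mem_homTree : forkTree ∈ homTree (k + 2) evenShift := by
  intro c hc
  have hone : ∀ j, forkTree (c j) = 1 → j = 1 ∨ j = 2 := fun j hj => by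
    rw [← hc.length_eq j]
    by_cases h : c j = [0] ∨ c j = [1, 0]
    · rcases h with h | h <;> simp [h]
    · simp [forkTree, h] at hj
  refine mem_evenShift_iff.mpr fun i l hgap => ?_
  have := hone i hgap.1
  have := hone _ hgap.2.2
  exact (show l = 0 by omega) ▸ ⟨0, rfl⟩

theorem not_IR_homTree_evenShift : ¬ IR (homTree (k + 2) evenShift) := by
  intro h
  obtain ⟨w, -, t, ht, htu, htv⟩ := h 0 2 (fun _ => 1) forkTree
    ⟨_, const_one_mem_homTree_evenShift, [], fun _ _ => rfl⟩
    ⟨_, forkTree_mem_homTree, [], fun _ _ => rfl⟩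
  obtain ⟨x, hx, hxt⟩ := exists_mem_take_of_mem_homTree ht (w ++ [0]) 0
  obtain ⟨y, hy, hyt⟩ := exists_mem_take_of_mem_homTree ht (w ++ [1, 0]) 0
  refine ne_one_of_agree_of_mem_evenShift hx hy (L := w.length) (p := 0) (fun j hj => ?_)
    (Nat.zero_le _) ?_ ?_ ?_ ?_
  · rw [hxt j (hj.trans (by simp)), hyt j (hj.trans (by simp)), List.take_append_of_le_length hj,
      List.take_append_of_le_length hj]
  · simpa [hxt 0] using htu [] le_rfl
  · rw [hxt (w.length + 1) (by simp), List.take_of_length_le (by simp), htv [0] (by simp)]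
    rfl
  · rw [hyt (w.length + 1) (by simp), List.take_append, List.take_of_length_le (by simp),
      Nat.add_sub_cancel_left, htv _ (by simp)]
    simp [forkTree]
  · rw [hyt (w.length + 2) (by simp), List.take_of_length_le (by simp), htv [1, 0] (by simp)]
    rfl

end EvenHomTree

/-- The even shift is topologically mixing, but its hom tree-shift is not
CPC-irreducible (hence not irreducible). -/
theorem stmt19 {k : ℕ} (hk : 2 ≤ k) :
    MixingShift evenShift ∧
    ¬ CPCIR (homTree k evenShift) ∧ ¬ IR (homTree k evenShift) := by
  obtain ⟨k, rfl⟩ : ∃ k', k = k' + 2 := ⟨k - 2, by omega⟩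
  exact ⟨evenShift_mixing, fun h => not_IR_homTree_evenShift h.IR, not_IR_homTree_evenShift⟩

end TreeShiftPaper
end
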